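/- Let d ≥ 1 and suppose S satisfies Assumptions Ω and J (the (d−1)-th moment bounds required of the class 𝒬 when d ≥ 4 are not needed for this result). Then the function |·|_S: ℝ^d → [0,∞) defined by |0|_S = 0 and |x|_S = μ_x̂·x/m_S for x ≠ 0 is a norm on ℝ^d, and it satisfies ‖x‖_∞ ≤ |x|_S ≤ ‖x‖₁ for every x ∈ ℝ^d. -/
import Mathlib


open scoped BigOperators ENNReal Real Topology Pointwise
open MeasureTheory Matrix Filter

noncomputable section

namespace OZpaper

variable {d : ℕ}

/-- Dot product of a real vector with a lattice point. -/
def rdotZ (μ : Fin d → ℝ) (x : Fin d → ℤ) : ℝ := ∑ i, μ i * (x i : ℝ)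

/-- Dot product of two real vectors. -/
def rdot (μ x : Fin d → ℝ) : ℝ := ∑ i, μ i * x i

/-- Euclidean norm of a lattice point. -/
def enormZ (x : Fin d → ℤ) : ℝ := Real.sqrt (∑ i, ((x i : ℝ)) ^ 2)

/-- Euclidean norm of a real vector. -/
def enormR (x : Fin d → ℝ) : ℝ := Real.sqrt (∑ i, (x i) ^ 2)

/-- ℓ¹ norm of a real vector. -/
def l1R (x : Fin d → ℝ) : ℝ := ∑ i, |x i|

/-- ℓ∞ norm of a real vector. -/
def linftyR (x : Fin d → ℝ) : ℝ := ⨆ i, |x i|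

/-- The vector `t • e₁`. -/
def e1R (d : ℕ) (t : ℝ) : Fin d → ℝ := fun i => if (i : ℕ) = 0 then t else 0

/-- The lattice point `n • e₁`. -/
def e1Z (d : ℕ) (n : ℤ) : Fin d → ℤ := fun i => if (i : ℕ) = 0 then n else 0

/-- Cast of a lattice point to a real vector. -/
def toR (x : Fin d → ℤ) : Fin d → ℝ := fun i => (x i : ℝ)

/-- ℤ^d-symmetry: invariance under coordinate permutations and sign flips. -/
def ZdSymmetric (f : (Fin d → ℤ) → ℝ) : Prop :=
  (∀ (σ : Equiv.Perm (Fin d)) (x : Fin d → ℤ), f (fun i => x (σ i)) = f x) ∧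
  (∀ (ε : Fin d → Bool) (x : Fin d → ℤ), f (fun i => if ε i then -(x i) else x i) = f x)

/-- Tilted susceptibility `χ^{(μ)}`, valued in `ℝ≥0∞`. -/
def chi (S : (Fin d → ℤ) → ℝ) (μ : Fin d → ℝ) : ℝ≥0∞ :=
  ∑' x, ENNReal.ofReal (S x * Real.exp (rdotZ μ x))

/-- The set `Ω = {μ : χ^{(μ)} < ∞}`. -/
def Omega (S : (Fin d → ℤ) → ℝ) : Set (Fin d → ℝ) := {μ | chi S μ < ⊤}

/-- The mass `m_S`. -/
def mass (S : (Fin d → ℤ) → ℝ) : ℝ := sSup {t : ℝ | 0 ≤ t ∧ chi S (e1R d t) < ⊤}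

/-- Assumption Ω. -/
structure AssumptionOmega (S : (Fin d → ℤ) → ℝ) : Prop where
  nonneg : ∀ x, 0 ≤ S x
  symm : ZdSymmetric S
  open_Omega : IsOpen (Omega S)
  zero_mem : (0 : Fin d → ℝ) ∈ Omega S
  exists_not_mem : ∃ μ₁ : ℝ, 0 < μ₁ ∧ e1R d μ₁ ∉ Omega S

/-- Fourier transform `Q̂(k) = ∑_y Q(y) e^{-i k·y}`. -/
def fourierZ (Q : (Fin d → ℤ) → ℝ) (k : Fin d → ℝ) : ℂ :=
  ∑' y, (Q y : ℂ) * Complex.exp (-Complex.I * (rdotZ k y : ℂ))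

/-- ℓ^p norm of a function on ℤ^d, valued in `ℝ≥0∞`. -/
def lpNorm (f : (Fin d → ℤ) → ℝ) (p : ℝ) : ℝ≥0∞ :=
  (∑' y, ENNReal.ofReal (|f y| ^ p)) ^ (1 / p)

/-- The exponent `p_d`. -/
def pExp (d : ℕ) (ζ : ℝ) : ℝ := if d = 1 then 2 else (d : ℝ) / ((d : ℝ) - 2 + min ζ 2)

/-- The class 𝒬_{M,K,ζ} without the (d-1)-th moment bounds. -/
structure MemQweak (M K ζ : ℝ) (Q g : (Fin d → ℤ) → ℝ) : Prop where
  Q_l1 : lpNorm Q 1 ≤ ENNReal.ofReal M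
  Q_moment : lpNorm (fun y => enormZ y ^ (2 + ζ) * Q y) 1 ≤ ENNReal.ofReal M
  infrared : ∀ k : Fin d → ℝ, (∀ i, |k i| ≤ π) →
    K * enormR k ^ 2 ≤ (fourierZ Q 0 - fourierZ Q k).re
  g_l1 : lpNorm g 1 ≤ ENNReal.ofReal M
  g_zeta : lpNorm (fun y => enormZ y ^ ζ * g y) 1 ≤ ENNReal.ofReal M
  g_two : lpNorm (fun y => enormZ y ^ (2 : ℝ) * g y) (min (pExp d ζ) 2) ≤ ENNReal.ofReal M

/-- The class 𝒬_{M,K,ζ}. -/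
structure MemQ (M K ζ : ℝ) (Q g : (Fin d → ℤ) → ℝ) : Prop where
  Q_l1 : lpNorm Q 1 ≤ ENNReal.ofReal M
  Q_moment : lpNorm (fun y => enormZ y ^ (2 + ζ) * Q y) 1 ≤ ENNReal.ofReal M
  infrared : ∀ k : Fin d → ℝ, (∀ i, |k i| ≤ π) →
    K * enormR k ^ 2 ≤ (fourierZ Q 0 - fourierZ Q k).re
  g_l1 : lpNorm g 1 ≤ ENNReal.ofReal M
  g_zeta : lpNorm (fun y => enormZ y ^ ζ * g y) 1 ≤ ENNReal.ofReal M
  g_two : lpNorm (fun y => enormZ y ^ (2 : ℝ) * g y) (min (pExp d ζ) 2) ≤ ENNReal.ofReal M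
  Q_dm1 : 4 ≤ d →
    lpNorm (fun y => enormZ y ^ ((d : ℝ) - 1) * Q y) (min ((d : ℝ) / 3) 2) ≤ ENNReal.ofReal M
  g_dm1 : 4 ≤ d →
    lpNorm (fun y => enormZ y ^ ((d : ℝ) - 1) * g y) 2 ≤ ENNReal.ofReal M

/-- Convolution on ℤ^d. -/
def conv (f g : (Fin d → ℤ) → ℝ) (x : Fin d → ℤ) : ℝ := ∑' y, f (x - y) * g y

/-- Exponential tilt `f^{(μ)}`. -/
def tilt (f : (Fin d → ℤ) → ℝ) (μ : Fin d → ℝ) : (Fin d → ℤ) → ℝ :=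
  fun x => f x * Real.exp (rdotZ μ x)

/-- `∑_y f(y) e^{μ·y}`, i.e. `f̂^{(μ)}(0)`. -/
def tiltSum (f : (Fin d → ℤ) → ℝ) (μ : Fin d → ℝ) : ℝ := ∑' y, f y * Real.exp (rdotZ μ y)

/-- Assumption J. -/
structure AssumptionJ (S J h : (Fin d → ℤ) → ℝ) (M K ζ : ℝ) : Prop where
  M_pos : 0 < M
  K_pos : 0 < K
  zeta_pos : 0 < ζ
  J_symm : ZdSymmetric J
  h_symm : ZdSymmetric h
  J_summable : Summable fun x => |J x|
  h_summable : Summable fun x => |h x|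
  OZ_eq : ∀ x, S x = h x + conv J S x
  memQ : ∀ μ ∈ closure (Omega S), MemQ M K ζ (tilt J μ) (tilt h μ)
  hhat_pos : ∀ μ ∈ closure (Omega S), 0 < tiltSum h μ

/-- Assumption J, without the (d-1)-th moment bounds of the class 𝒬. -/
structure AssumptionJweak (S J h : (Fin d → ℤ) → ℝ) (M K ζ : ℝ) : Prop where
  M_pos : 0 < M
  K_pos : 0 < K
  zeta_pos : 0 < ζ
  J_symm : ZdSymmetric J
  h_symm : ZdSymmetric h
  J_summable : Summable fun x => |J x|
  h_summable : Summable fun x => |h x|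
  OZ_eq : ∀ x, S x = h x + conv J S x
  memQ : ∀ μ ∈ closure (Omega S), MemQweak M K ζ (tilt J μ) (tilt h μ)
  hhat_pos : ∀ μ ∈ closure (Omega S), 0 < tiltSum h μ

/-- `μ` is the optimal tilt `μ_x̂` for direction `x`. -/
def IsOptTilt (S : (Fin d → ℤ) → ℝ) (x μ : Fin d → ℝ) : Prop :=
  μ ∈ frontier (Omega S) ∧ ∀ ν ∈ closure (Omega S), rdot ν x ≤ rdot μ x

/-- The norm `|x|_S = (max_{μ ∈ Ω̄} μ·x)/m_S`. -/
def normS (S : (Fin d → ℤ) → ℝ) (x : Fin d → ℝ) : ℝ :=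
  sSup ((fun μ => rdot μ x) '' closure (Omega S)) / mass S

/-- The drift vector `η` of the tilted kernel. -/
def etaOf (J : (Fin d → ℤ) → ℝ) (μ : Fin d → ℝ) : Fin d → ℝ :=
  fun j => ∑' y, (y j : ℝ) * J y * Real.exp (rdotZ μ y)

/-- The covariance matrix `Λ` of the tilted kernel. -/
def LambdaOf (J : (Fin d → ℤ) → ℝ) (μ : Fin d → ℝ) : Matrix (Fin d) (Fin d) ℝ :=
  Matrix.of fun j l => ∑' y, (y j : ℝ) * (y l : ℝ) * J y * Real.exp (rdotZ μ y)

/-- The Brownian heat kernel `ρ_t(x; η, Λ)`. -/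
def heatKer (d : ℕ) (t : ℝ) (x η : Fin d → ℝ) (Λ : Matrix (Fin d) (Fin d) ℝ) : ℝ :=
  (1 / Real.sqrt Λ.det) * (1 / (2 * π * t) ^ ((d : ℝ) / 2)) *
    Real.exp (-(1 / (2 * t)) * rdot (x - t • η) (Λ⁻¹ *ᵥ (x - t • η)))

/-- The Brownian Green function `𝒞(x; η, Λ)`. -/
def greenC (d : ℕ) (x η : Fin d → ℝ) (Λ : Matrix (Fin d) (Fin d) ℝ) : ℝ :=
  ∫ t in Set.Ioi (0 : ℝ), heatKer d t x η Λ

/-- The massive continuum Green function `𝔾_a(x)`. -/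
def massiveG (d : ℕ) (a : ℝ) (x : Fin d → ℝ) : ℝ :=
  ∫ t in Set.Ioi (0 : ℝ),
    (1 / (2 * π * t) ^ ((d : ℝ) / 2)) * Real.exp (-enormR x ^ 2 / (2 * t)) *
      Real.exp (-(t * a ^ 2) / 2)

/-- The constant `A_φ = ∫_{ℝ^d} ‖y‖₂^φ 𝔾₁(y) dy`. -/
def Aconst (d : ℕ) (φ : ℝ) : ℝ := ∫ y : Fin d → ℝ, enormR y ^ φ * massiveG d 1 y

/-- The torus `[-π, π]^d`. -/
def torus (d : ℕ) : Set (Fin d → ℝ) := Set.univ.pi fun _ => Set.Icc (-π) π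

/-- The Fourier integral `I_t(x)`. -/
def It (Q g : (Fin d → ℤ) → ℝ) (t : ℝ) (x : Fin d → ℤ) : ℂ :=
  (((2 * π) ^ d : ℝ) : ℂ)⁻¹ *
    ∫ k in torus d, Complex.exp (Complex.I * (rdotZ k x : ℂ)) * fourierZ g k *
      Complex.exp (-(t : ℂ) * (fourierZ Q 0 - fourierZ Q k))

/-- The quantity `G_Q(x)`. -/
def GQ (Q g : (Fin d → ℤ) → ℝ) (x : Fin d → ℤ) : ℂ :=
  ∫ t in Set.Ioi (0 : ℝ), It Q g t x

/-- The Kronecker delta at the origin. -/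
def deltaZ (d : ℕ) : (Fin d → ℤ) → ℝ := fun x => if x = 0 then 1 else 0

/-- n-fold convolution power. -/
def convPow (D : (Fin d → ℤ) → ℝ) : ℕ → (Fin d → ℤ) → ℝ
  | 0 => deltaZ d
  | n + 1 => conv D (convPow D n)

/-- Random-walk Green function `S_z(x) = ∑_n z^n D^{*n}(x)`. -/
def rwG (D : (Fin d → ℤ) → ℝ) (z : ℝ) (x : Fin d → ℤ) : ℝ :=
  ∑' n : ℕ, z ^ n * convPow D n x

/-- `σ² = ∑_x ‖x‖₂² J(x)`. -/
def sigmaSq (J : (Fin d → ℤ) → ℝ) : ℝ := ∑' x, enormZ x ^ 2 * J x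

/-- Susceptibility `χ = ∑_x S(x)`. -/
def suscept (S : (Fin d → ℤ) → ℝ) : ℝ := ∑' x, S x

/-- `ĥ(0) = ∑_x h(x)`. -/
def h0 (h : (Fin d → ℤ) → ℝ) : ℝ := ∑' x, h x

/-- Correlation length of order φ. -/
def xiPhi (S : (Fin d → ℤ) → ℝ) (φ : ℝ) : ℝ :=
  ((∑' x, enormZ x ^ φ * S x) / suscept S) ^ (1 / φ)

/-- A critical family of OZ systems. -/
structure CriticalFamily (d : ℕ) (δ zc M K ζ : ℝ) (S J h : ℝ → (Fin d → ℤ) → ℝ) : Prop where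
  δ_pos : 0 < δ
  assumOmega : ∀ z ∈ Set.Ico (zc - δ) zc, AssumptionOmega (S z)
  assumJ : ∀ z ∈ Set.Ico (zc - δ) zc, AssumptionJ (S z) (J z) (h z) M K ζ
  mass_tendsto : Tendsto (fun z => mass (S z)) (𝓝[<] zc) (𝓝 0)

/-- Convolution on ℤ. -/
def convZ (f g : ℤ → ℝ) (x : ℤ) : ℝ := ∑' y, f (x - y) * g y

/-- n-fold convolution power on ℤ. -/
def convZPow (f : ℤ → ℝ) : ℕ → ℤ → ℝ
  | 0 => fun x => if x = 0 then 1 else 0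
  | n + 1 => convZ f (convZPow f n)

section AuxNorm

lemma chi_eq_of_equiv (S : (Fin d → ℤ) → ℝ) (μ ν : Fin d → ℝ)
    (e : (Fin d → ℤ) ≃ (Fin d → ℤ)) (hSe : ∀ x, S (e x) = S x)
    (hre : ∀ x, rdotZ ν (e x) = rdotZ μ x) : chi S μ = chi S ν := by
  unfold chi
  calc (∑' x, ENNReal.ofReal (S x * Real.exp (rdotZ μ x)))
      = ∑' x, ENNReal.ofReal (S (e x) * Real.exp (rdotZ ν (e x))) :=
        tsum_congr fun x => by rw [hSe, hre]
    _ = ∑' x, ENNReal.ofReal (S x * Real.exp (rdotZ ν x)) :=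
        e.tsum_eq fun x => ENNReal.ofReal (S x * Real.exp (rdotZ ν x))

lemma chi_flip (S : (Fin d → ℤ) → ℝ) (hsym : ZdSymmetric S) (ε : Fin d → Bool) (μ : Fin d → ℝ) :
    chi S μ = chi S (fun i => if ε i then -μ i else μ i) := by
  refine chi_eq_of_equiv S μ _ (Function.Involutive.toPerm
      (fun x i => if ε i then -(x i) else x i)
      (fun x => by funext i; by_cases h : ε i <;> simp [h]))
    (fun x => hsym.2 ε x) (fun x => ?_)
  show (∑ i, (if ε i then -μ i else μ i) * (((if ε i then -(x i) else x i) : ℤ) : ℝ)) = _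
  refine Finset.sum_congr rfl fun i _ => ?_
  by_cases h : ε i <;> simp [h, rdotZ]

lemma chi_perm (S : (Fin d → ℤ) → ℝ) (hsym : ZdSymmetric S) (σ : Equiv.Perm (Fin d))
    (μ : Fin d → ℝ) : chi S μ = chi S (fun j => μ (σ j)) := by
  refine chi_eq_of_equiv S μ _
    ⟨fun x i => x (σ i), fun x i => x (σ.symm i),
      fun x => by funext i; simp, fun x => by funext i; simp⟩
    (fun x => hsym.1 σ x) (fun x => ?_)
  show (∑ i, μ (σ i) * ((x (σ i) : ℤ) : ℝ)) = ∑ i, μ i * ((x i : ℤ) : ℝ)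
  exact Equiv.sum_comp σ (fun i => μ i * ((x i : ℤ) : ℝ))

lemma chi_le_add (S : (Fin d → ℤ) → ℝ) (hnn : ∀ x, 0 ≤ S x) (ν μ μ' : Fin d → ℝ)
    (hle : ∀ x, Real.exp (rdotZ ν x) ≤ Real.exp (rdotZ μ x) + Real.exp (rdotZ μ' x)) :
    chi S ν ≤ chi S μ + chi S μ' := by
  unfold chi
  rw [← ENNReal.tsum_add]
  refine ENNReal.tsum_le_tsum fun x => ?_
  rw [← ENNReal.ofReal_add (mul_nonneg (hnn x) (Real.exp_pos _).le)
    (mul_nonneg (hnn x) (Real.exp_pos _).le)]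
  refine ENNReal.ofReal_le_ofReal ?_
  rw [← mul_add]
  exact mul_le_mul_of_nonneg_left (hle x) (hnn x)

lemma rdotZ_single (c : ℝ) (i : Fin d) (x : Fin d → ℤ) :
    rdotZ (fun j => if j = i then c else 0) x = c * (x i : ℝ) := by
  unfold rdotZ
  rw [Finset.sum_eq_single i (fun j _ hj => by simp [hj])
    (fun h => absurd (Finset.mem_univ i) h)]
  simp

lemma rdot_single (c : ℝ) (i : Fin d) (x : Fin d → ℝ) :
    rdot (fun j => if j = i then c else 0) x = c * x i := by
  unfold rdot
  rw [Finset.sum_eq_single i (fun j _ hj => by simp [hj])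
    (fun h => absurd (Finset.mem_univ i) h)]
  simp

lemma rdot_add (μ x y : Fin d → ℝ) : rdot μ (x + y) = rdot μ x + rdot μ y := by
  unfold rdot
  rw [← Finset.sum_add_distrib]
  exact Finset.sum_congr rfl fun i _ => by simp [mul_add]

lemma rdot_smul (a : ℝ) (μ x : Fin d → ℝ) : rdot μ (a • x) = a * rdot μ x := by
  unfold rdot
  rw [Finset.mul_sum]
  exact Finset.sum_congr rfl fun i _ => by simp [Pi.smul_apply, smul_eq_mul]; ring

lemma rdot_zero (μ : Fin d → ℝ) : rdot μ 0 = 0 := by simp [rdot]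

lemma rdot_neg_left (μ x : Fin d → ℝ) : rdot (-μ) x = rdot μ (-x) := by
  unfold rdot
  exact Finset.sum_congr rfl fun i _ => by simp

lemma e1R_eq_single (hd : 0 < d) (c : ℝ) :
    e1R d c = fun j => if j = (⟨0, hd⟩ : Fin d) then c else 0 := by
  funext j
  simp [e1R, Fin.ext_iff]

lemma chi_e1_neg (S : (Fin d → ℤ) → ℝ) (hsym : ZdSymmetric S) (t : ℝ) :
    chi S (e1R d t) = chi S (e1R d (-t)) := by
  rw [chi_flip S hsym (fun j => decide ((j : ℕ) = 0)) (e1R d t)]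
  congr 1
  funext j
  by_cases h : (j : ℕ) = 0 <;> simp [e1R, h]

lemma chi_neg (S : (Fin d → ℤ) → ℝ) (hsym : ZdSymmetric S) (μ : Fin d → ℝ) :
    chi S μ = chi S (-μ) := by
  rw [chi_flip S hsym (fun _ => true) μ]
  congr 1

lemma chi_single (S : (Fin d → ℤ) → ℝ) (hsym : ZdSymmetric S) (hd : 0 < d) (c : ℝ) (i : Fin d) :
    chi S (fun j => if j = i then c else 0) = chi S (e1R d c) := by
  rw [chi_perm S hsym (Equiv.swap (⟨0, hd⟩ : Fin d) i) (fun j => if j = i then c else 0),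
    e1R_eq_single hd]
  congr 1
  funext j
  by_cases hj : j = (⟨0, hd⟩ : Fin d)
  · subst hj; simp [Equiv.swap_apply_left]
  · rw [if_neg (fun he => hj ((Equiv.swap _ _).injective
      (he.trans (Equiv.swap_apply_left _ i).symm))), if_neg hj]

end AuxNorm

theorem statement3 (d : ℕ) (hd : 1 ≤ d) (S J h : (Fin d → ℤ) → ℝ) (M K ζ : ℝ)
    (hS : AssumptionOmega S) (hJ : AssumptionJweak S J h M K ζ) :
    (∀ x : Fin d → ℝ, 0 ≤ normS S x) ∧
    (∀ x : Fin d → ℝ, normS S x = 0 ↔ x = 0) ∧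
    (∀ (a : ℝ) (x : Fin d → ℝ), normS S (a • x) = |a| * normS S x) ∧
    (∀ x y : Fin d → ℝ, normS S (x + y) ≤ normS S x + normS S y) ∧
    (∀ x : Fin d → ℝ, linftyR x ≤ normS S x ∧ normS S x ≤ l1R x) := by
  clear hJ
  have hd0 : 0 < d := hd
  haveI : Nonempty (Fin d) := ⟨⟨0, hd0⟩⟩
  set T : Set ℝ := {t : ℝ | 0 ≤ t ∧ chi S (e1R d t) < ⊤} with hT
  -- 0 ∈ T
  have he1R0 : e1R d (0 : ℝ) = (0 : Fin d → ℝ) := by funext i; simp [e1R]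
  have hT0 : (0 : ℝ) ∈ T := ⟨le_refl 0, by rw [he1R0]; exact hS.zero_mem⟩
  -- monotonicity along the axis
  have haxis : ∀ s t : ℝ, 0 ≤ s → s ≤ t → chi S (e1R d t) < ⊤ → chi S (e1R d s) < ⊤ := by
    intro s t hs hst ht
    have ht0 : 0 ≤ t := hs.trans hst
    have hle : chi S (e1R d s) ≤ chi S (e1R d t) + chi S (e1R d (-t)) := by
      refine chi_le_add S hS.nonneg _ _ _ fun x => ?_
      rw [e1R_eq_single hd0 s, e1R_eq_single hd0 t, e1R_eq_single hd0 (-t),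
        rdotZ_single, rdotZ_single, rdotZ_single]
      set u : ℝ := ((x (⟨0, hd0⟩ : Fin d) : ℤ) : ℝ)
      rcases le_total 0 u with hu | hu
      · have h1 : s * u ≤ t * u := mul_le_mul_of_nonneg_right hst hu
        calc Real.exp (s * u) ≤ Real.exp (t * u) := Real.exp_le_exp.2 h1
          _ ≤ _ := le_add_of_nonneg_right (Real.exp_pos _).le
      · have h1 : s * u ≤ -t * u := by nlinarith
        calc Real.exp (s * u) ≤ Real.exp (-t * u) := Real.exp_le_exp.2 h1
          _ ≤ _ := le_add_of_nonneg_left (Real.exp_pos _).le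
    rw [← chi_e1_neg S hS.symm t] at hle
    exact lt_of_le_of_lt hle (by simpa using ENNReal.add_lt_top.2 ⟨ht, ht⟩)
  -- T is bounded above
  obtain ⟨μ₁, hμ₁pos, hμ₁⟩ := hS.exists_not_mem
  have hTbdd : BddAbove T := by
    refine ⟨μ₁, fun t ht => ?_⟩
    by_contra hlt
    push_neg at hlt
    exact hμ₁ (haxis μ₁ t hμ₁pos.le hlt.le ht.2)
  have hmemT : ∀ t ∈ T, t ≤ mass S := fun t ht => le_csSup hTbdd ht
  -- positivity of the mass
  have hmpos : 0 < mass S := by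
    obtain ⟨ε, hε, hball⟩ := Metric.isOpen_iff.1 hS.open_Omega 0 hS.zero_mem
    have hmem : e1R d (ε / 2) ∈ Metric.ball (0 : Fin d → ℝ) ε := by
      rw [Metric.mem_ball, dist_zero_right]
      rw [pi_norm_lt_iff hε]
      intro i
      by_cases h : (i : ℕ) = 0 <;> simp [e1R, h, abs_of_nonneg hε.le] <;> linarith
    have : (ε / 2) ∈ T := ⟨by positivity, hball hmem⟩
    exact lt_of_lt_of_le (by positivity) (hmemT _ this)
  -- projections of points of Omega lie in T
  have hproj : ∀ μ ∈ Omega S, ∀ i : Fin d, chi S (fun j => if j = i then μ i else 0) < ⊤ := by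
    intro μ hμ i
    set μ' : Fin d → ℝ := fun j => if j = i then μ j else -μ j with hμ'def
    have hflip : chi S μ = chi S μ' := by
      rw [chi_flip S hS.symm (fun j => decide (¬ j = i)) μ]
      congr 1
      funext j
      by_cases hj : j = i <;> simp [hj, hμ'def]
    have hle : chi S (fun j => if j = i then μ i else 0) ≤ chi S μ + chi S μ' := by
      refine chi_le_add S hS.nonneg _ _ _ fun x => ?_
      have h2 : rdotZ μ' x = 2 * (μ i * ((x i : ℤ) : ℝ)) - rdotZ μ x := by
        have hterm : ∀ j : Fin d, μ' j * ((x j : ℤ) : ℝ) =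
            (if j = i then 2 * (μ j * ((x j : ℤ) : ℝ)) else 0) - μ j * ((x j : ℤ) : ℝ) := by
          intro j
          by_cases hj : j = i <;> simp [hμ'def, hj] <;> ring
        unfold rdotZ
        rw [Finset.sum_congr rfl fun j _ => hterm j, Finset.sum_sub_distrib,
          Finset.sum_ite_eq' Finset.univ i (fun j => 2 * (μ j * ((x j : ℤ) : ℝ)))]
        simp [rdotZ]
      rw [rdotZ_single, h2]
      set a : ℝ := μ i * ((x i : ℤ) : ℝ)
      set b : ℝ := rdotZ μ x
      rcases le_total a b with hab | hab
      · calc Real.exp a ≤ Real.exp b := Real.exp_le_exp.2 hab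
          _ ≤ _ := le_add_of_nonneg_right (Real.exp_pos _).le
      · calc Real.exp a ≤ Real.exp (2 * a - b) := Real.exp_le_exp.2 (by linarith)
          _ ≤ _ := le_add_of_nonneg_left (Real.exp_pos _).le
    rw [← hflip] at hle
    exact lt_of_le_of_lt hle (by simpa using ENNReal.add_lt_top.2 ⟨hμ, hμ⟩)
  -- coordinates of points of Omega lie in T (in absolute value)
  have habs : ∀ μ ∈ Omega S, ∀ i : Fin d, |μ i| ∈ T := by
    intro μ hμ i
    refine ⟨abs_nonneg _, ?_⟩
    have h1 : chi S (e1R d (μ i)) < ⊤ := by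
      rw [← chi_single S hS.symm hd0 (μ i) i]; exact hproj μ hμ i
    rcases le_total 0 (μ i) with hsgn | hsgn
    · rwa [abs_of_nonneg hsgn]
    · rw [abs_of_nonpos hsgn, ← chi_e1_neg S hS.symm (μ i)]
      exact h1
  -- closure box bound
  have hclbox : ∀ μ ∈ closure (Omega S), ∀ i : Fin d, |μ i| ≤ mass S := by
    have hC : IsClosed {ν : Fin d → ℝ | ∀ i, |ν i| ≤ mass S} := by
      have heq : {ν : Fin d → ℝ | ∀ i, |ν i| ≤ mass S} =
          ⋂ i, {ν : Fin d → ℝ | |ν i| ≤ mass S} := by ext ν; simp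
      rw [heq]
      exact isClosed_iInter fun i =>
        isClosed_le ((continuous_apply i).abs) continuous_const
    have hsub : Omega S ⊆ {ν : Fin d → ℝ | ∀ i, |ν i| ≤ mass S} :=
      fun μ hμ i => hmemT _ (habs μ hμ i)
    exact fun μ hμ i => (closure_minimal hsub hC) hμ i
  -- single-coordinate vectors with |c| ∈ T belong to Omega
  have hin : ∀ t ∈ T, ∀ (i : Fin d) (c : ℝ), |c| = t →
      (fun j => if j = i then c else 0) ∈ Omega S := by
    intro t ht i c hc
    have : chi S (fun j => if j = i then c else 0) = chi S (e1R d t) := by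
      rw [chi_single S hS.symm hd0 c i]
      rcases le_total 0 c with hsgn | hsgn
      · rw [← hc, abs_of_nonneg hsgn]
      · rw [chi_e1_neg S hS.symm c, ← hc, abs_of_nonpos hsgn]
    show chi S _ < ⊤
    rw [this]
    exact ht.2
  -- negation preserves closure of Omega
  have hnegΩ : ∀ μ ∈ Omega S, -μ ∈ Omega S := by
    intro μ hμ
    show chi S (-μ) < ⊤
    rw [← chi_neg S hS.symm μ]
    exact hμ
  have hnegcl : ∀ μ ∈ closure (Omega S), -μ ∈ closure (Omega S) := by
    intro μ hμ
    exact map_mem_closure continuous_neg hμ fun ν hν => hnegΩ ν hν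
  -- the support-function set
  set A : (Fin d → ℝ) → Set ℝ := fun x => (fun μ => rdot μ x) '' closure (Omega S) with hA
  have hzeroA : ∀ x, (0 : ℝ) ∈ A x :=
    fun x => ⟨0, subset_closure hS.zero_mem, by simp [rdot]⟩
  have hAne : ∀ x, (A x).Nonempty := fun x => ⟨0, hzeroA x⟩
  have hubA : ∀ (x : Fin d → ℝ), ∀ r ∈ A x, r ≤ mass S * l1R x := by
    rintro x r ⟨μ, hμ, rfl⟩
    calc rdot μ x ≤ ∑ i, |μ i * x i| := Finset.sum_le_sum fun i _ => le_abs_self _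
      _ = ∑ i, |μ i| * |x i| := by simp [abs_mul]
      _ ≤ ∑ i, mass S * |x i| := Finset.sum_le_sum fun i _ =>
          mul_le_mul_of_nonneg_right (hclbox μ hμ i) (abs_nonneg _)
      _ = mass S * l1R x := by rw [l1R, Finset.mul_sum]
  have hbddA : ∀ x, BddAbove (A x) := fun x => ⟨mass S * l1R x, fun r hr => hubA x r hr⟩
  have hFnonneg : ∀ x, 0 ≤ sSup (A x) := fun x => le_csSup (hbddA x) (hzeroA x)
  have hFub : ∀ x, sSup (A x) ≤ mass S * l1R x := fun x => csSup_le (hAne x) (hubA x)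
  -- lower bound
  have hlow : ∀ (x : Fin d → ℝ) (i : Fin d), mass S * |x i| ≤ sSup (A x) := by
    intro x i
    rcases eq_or_ne (x i) 0 with h0 | h0
    · rw [h0]; simpa using hFnonneg x
    · have hxi : 0 < |x i| := abs_pos.2 h0
      have key : ∀ t ∈ T, t * |x i| ≤ sSup (A x) := by
        intro t ht
        set c : ℝ := if 0 ≤ x i then t else -t with hcdef
        have hc : |c| = t := by
          by_cases hsg : 0 ≤ x i <;> simp [hcdef, hsg, abs_of_nonneg ht.1]
        have hmem : (fun j => if j = i then c else 0) ∈ closure (Omega S) :=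
          subset_closure (hin t ht i c hc)
        have hval : rdot (fun j => if j = i then c else 0) x = t * |x i| := by
          rw [rdot_single]
          by_cases hsg : 0 ≤ x i
          · rw [abs_of_nonneg hsg]; simp [hcdef, hsg]
          · rw [abs_of_neg (lt_of_not_ge hsg)]; simp [hcdef, hsg]
        exact le_csSup (hbddA x) ⟨_, hmem, hval⟩
      have hmle : mass S ≤ sSup (A x) / |x i| :=
        csSup_le ⟨0, hT0⟩ fun t ht => (le_div_iff₀ hxi).2 (key t ht)
      calc mass S * |x i| ≤ (sSup (A x) / |x i|) * |x i| :=
            mul_le_mul_of_nonneg_right hmle hxi.le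
        _ = sSup (A x) := div_mul_cancel₀ _ hxi.ne'
  -- A of a negated vector
  have hAneg : ∀ y : Fin d → ℝ, A (-y) = A y := by
    intro y
    ext r
    constructor
    · rintro ⟨μ, hμ, rfl⟩
      exact ⟨-μ, hnegcl μ hμ, by
        show rdot (-μ) y = rdot μ (-y); exact rdot_neg_left μ y⟩
    · rintro ⟨μ, hμ, rfl⟩
      refine ⟨-μ, hnegcl μ hμ, ?_⟩
      show rdot (-μ) (-y) = rdot μ y
      rw [rdot_neg_left, neg_neg]
  -- sSup (A 0) = 0
  have hA0 : sSup (A (0 : Fin d → ℝ)) = 0 := by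
    refine le_antisymm (csSup_le (hAne 0) ?_) (hFnonneg 0)
    rintro r ⟨μ, hμ, rfl⟩
    show rdot μ 0 ≤ 0
    rw [rdot_zero]
  -- positive homogeneity
  have hsmul : ∀ (a : ℝ), 0 ≤ a → ∀ x, sSup (A (a • x)) = a * sSup (A x) := by
    intro a ha x
    rcases eq_or_lt_of_le ha with rfl | ha'
    · rw [zero_smul, hA0, zero_mul]
    · apply le_antisymm
      · refine csSup_le (hAne _) ?_
        rintro r ⟨μ, hμ, rfl⟩
        show rdot μ (a • x) ≤ a * sSup (A x)
        rw [rdot_smul]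
        exact mul_le_mul_of_nonneg_left (le_csSup (hbddA x) ⟨μ, hμ, rfl⟩) ha
      · rw [← le_div_iff₀' ha']
        refine csSup_le (hAne x) ?_
        rintro r ⟨μ, hμ, rfl⟩
        show rdot μ x ≤ sSup (A (a • x)) / a
        rw [le_div_iff₀' ha']
        exact le_csSup (hbddA _) ⟨μ, hμ, by
          show rdot μ (a • x) = a * rdot μ x; rw [rdot_smul]⟩
  -- triangle inequality on sups
  have htri : ∀ x y : Fin d → ℝ, sSup (A (x + y)) ≤ sSup (A x) + sSup (A y) := by
    intro x y
    refine csSup_le (hAne _) ?_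
    rintro r ⟨μ, hμ, rfl⟩
    show rdot μ (x + y) ≤ sSup (A x) + sSup (A y)
    rw [rdot_add]
    exact add_le_add (le_csSup (hbddA x) ⟨μ, hμ, rfl⟩) (le_csSup (hbddA y) ⟨μ, hμ, rfl⟩)
  have hnormS : ∀ x, normS S x = sSup (A x) / mass S := fun x => rfl
  refine ⟨?_, ?_, ?_, ?_, ?_⟩
  · intro x
    rw [hnormS]
    exact div_nonneg (hFnonneg x) hmpos.le
  · intro x
    constructor
    · intro hx
      by_contra hx0
      obtain ⟨i, hi⟩ : ∃ i, x i ≠ 0 := by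
        by_contra hall
        push_neg at hall
        exact hx0 (funext hall)
      have h1 : 0 < mass S * |x i| := mul_pos hmpos (abs_pos.2 hi)
      have h2 : sSup (A x) = 0 := by
        have := hx
        rw [hnormS, div_eq_zero_iff] at this
        rcases this with h | h
        · exact h
        · exact absurd h hmpos.ne'
      linarith [hlow x i]
    · rintro rfl
      rw [hnormS, hA0, zero_div]
  · intro a x
    rcases le_total 0 a with ha | ha
    · rw [hnormS, hnormS, hsmul a ha x, abs_of_nonneg ha, mul_div_assoc]
    · have hax : a • x = (-a) • (-x) := by rw [neg_smul, smul_neg, neg_neg]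
      rw [hnormS, hnormS, hax, hsmul (-a) (by linarith) (-x), hAneg, abs_of_nonpos ha,
        mul_div_assoc]
  · intro x y
    rw [hnormS, hnormS, hnormS, ← add_div]
    exact div_le_div_of_nonneg_right (htri x y) hmpos.le
  · intro x
    constructor
    · rw [hnormS]
      show (⨆ i, |x i|) ≤ sSup (A x) / mass S
      refine ciSup_le fun i => ?_
      rw [le_div_iff₀ hmpos]
      calc |x i| * mass S = mass S * |x i| := mul_comm _ _
        _ ≤ sSup (A x) := hlow x i
    · rw [hnormS, div_le_iff₀ hmpos]
      calc sSup (A x) ≤ mass S * l1R x := hFub x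
        _ = l1R x * mass S := mul_comm _ _

end OZpaper
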